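/- For any a > 0 and y ∈ ℝ, exp(-a²y²) = Σ_{n=0}^∞ (-1)^n a^{2n} / (2^{2n} n! (1+a²)^{n+1/2}) · H_{2n}(y), where H_{2n} denotes the classical physicists' Hermite polynomial, and the series converges absolutely. -/

import Mathlib

open Finset

/-- The classical physicists' Hermite polynomial
`H_n(x) = n! ∑_{j=0}^{⌊n/2⌋} (-1)^j/(j!(n-2j)!) (2x)^{n-2j}`. -/
noncomputable def hermitePhys (n : ℕ) (x : ℝ) : ℝ :=
  (n.factorial : ℝ) * ∑ j ∈ Finset.range (n / 2 + 1),
    (-1 : ℝ) ^ j / (j.factorial * (n - 2 * j).factorial) * (2 * x) ^ (n - 2 * j)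

/-!
Write `q = a² / (1 + a²)`, so that `(1 + a²)^(m + 1/2) = (1 - q)^(-(m + 1/2))`. Expanding
`exp(-a²y²) = ∑ₘ (-a²y²)^m / m!` and inserting, in the `m`-th term, the binomial series
`1 = (1 - q)^(m + 1/2) ∑ⱼ (m + 1/2)ⱼ qʲ / j!` gives a double series over `(m, j)` that converges
absolutely (with `|y|` in place of `y` it is the same expansion of `exp(a²y²)`). Summing it along
the antidiagonals `m + j = n` instead produces the `n`-th Hermite term: with
`(2k)! = 4^k k! (1/2)ₖ` and `(1/2)ₙ = (1/2)ₘ (m + 1/2)ⱼ`, the `(n - j, j)` term is the `j`-th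
summand of `H_{2n}(y)` times the `n`-th coefficient.
-/

open Polynomial
open scoped Nat

theorem Real.hasSum_ascPochhammer_mul_pow_div_factorial (s : ℝ) {x : ℝ} (hx : |x| < 1) :
    HasSum (fun n => (ascPochhammer ℝ n).eval s * x ^ n / n !) (1 / (1 - x) ^ s) := by
  have hmem : x ∈ Metric.eball (0 : ℝ) 1 := by
    simpa [enorm_eq_nnnorm, ← NNReal.coe_lt_coe] using hx
  have h := (Real.one_div_one_sub_rpow_hasFPowerSeriesOnBall_zero s).hasSum hmem
  simp only [FormalMultilinearSeries.ofScalars_apply_eq, zero_add] at h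
  refine h.congr_fun fun n => ?_
  rw [← Ring.multichoose_eq, ← ascPochhammer_smeval_eq_eval,
    ← Ring.factorial_nsmul_multichoose_eq_ascPochhammer, nsmul_eq_mul, smul_eq_mul]
  field_simp

theorem HasSum.sum_antidiagonal {A α : Type*} [AddCommMonoid A] [HasAntidiagonal A]
    [AddCommMonoid α] [TopologicalSpace α] [ContinuousAdd α] [RegularSpace α]
    {f : A × A → α} {a : α} (hf : HasSum f a) :
    HasSum (fun n => ∑ p ∈ antidiagonal n, f p) a := by
  have := (HasAntidiagonal.sigmaAntidiagonalEquivProd.hasSum_iff.mpr hf).sigma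
    fun n => hasSum_fintype _
  simpa [sum_attach] using this

theorem Nat.cast_factorial_two_mul {K : Type*} [Field K] [CharZero K] (k : ℕ) :
    ((2 * k)! : K) = 4 ^ k * k ! * (ascPochhammer K k).eval (1 / 2) := by
  induction k with
  | zero => simp
  | succ k ih =>
    rw [Nat.mul_succ, Nat.factorial_succ, Nat.factorial_succ, ascPochhammer_succ_right, eval_mul,
      eval_add, eval_X, eval_natCast, Nat.factorial_succ]
    push_cast
    rw [ih]
    ring

theorem ascPochhammer_eval_add {S : Type*} [CommSemiring S] (c : S) (m j : ℕ) :
    (ascPochhammer S (m + j)).eval c =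
      (ascPochhammer S m).eval c * (ascPochhammer S j).eval (c + m) := by
  rw [← ascPochhammer_mul, eval_mul, eval_comp, eval_add, eval_X, eval_natCast]

noncomputable def expBinomialTerm (c z x : ℝ) (p : ℕ × ℕ) : ℝ :=
  z ^ p.1 / p.1 ! * ((ascPochhammer ℝ p.2).eval (c + p.1) * x ^ p.2 / p.2 !) *
    (1 - x) ^ (c + p.1)

section expBinomialTerm

variable {c x : ℝ}

theorem hasSum_expBinomialTerm_fst (z : ℝ) (hx : |x| < 1) (m : ℕ) :
    HasSum (fun j => expBinomialTerm c z x (m, j)) (z ^ m / m !) := by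
  have hpos : 0 < (1 - x) ^ (c + m) := Real.rpow_pos_of_pos (by linarith [le_abs_self x]) _
  have h := ((Real.hasSum_ascPochhammer_mul_pow_div_factorial (c + m) hx).mul_left
    (z ^ m / m !)).mul_right ((1 - x) ^ (c + m))
  rwa [one_div, mul_assoc, inv_mul_cancel₀ hpos.ne', mul_one] at h

theorem abs_expBinomialTerm (hc : 0 < c) (hx : 0 ≤ x) (hx1 : x < 1) (z : ℝ) (p : ℕ × ℕ) :
    |expBinomialTerm c z x p| = expBinomialTerm c |z| x p := by
  have hpoch : 0 < (ascPochhammer ℝ p.2).eval (c + p.1) := ascPochhammer_pos _ _ (by positivity)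
  have hpow : 0 ≤ (1 - x) ^ (c + p.1) := Real.rpow_nonneg (by linarith) _
  simp only [expBinomialTerm, abs_mul, abs_div, abs_pow, Nat.abs_cast]
  rw [abs_of_nonneg hx, abs_of_pos hpoch, abs_of_nonneg hpow]

theorem summable_abs_expBinomialTerm (hc : 0 < c) (hx : 0 ≤ x) (hx1 : x < 1) (z : ℝ) :
    Summable fun p => |expBinomialTerm c z x p| := by
  have hx' : |x| < 1 := by rwa [abs_of_nonneg hx]
  simp only [abs_expBinomialTerm hc hx hx1]
  refine (summable_prod_of_nonneg fun p => ?_).2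
    ⟨fun m => (hasSum_expBinomialTerm_fst |z| hx' m).summable, ?_⟩
  · rw [Pi.zero_apply, ← abs_expBinomialTerm hc hx hx1 z]
    exact abs_nonneg _
  · simpa only [(hasSum_expBinomialTerm_fst |z| hx' _).tsum_eq]
      using Real.summable_pow_div_factorial |z|

theorem hasSum_expBinomialTerm (hc : 0 < c) (hx : 0 ≤ x) (hx1 : x < 1) (z : ℝ) :
    HasSum (expBinomialTerm c z x) (Real.exp z) := by
  have hx' : |x| < 1 := by rwa [abs_of_nonneg hx]
  have hsum := (summable_abs_expBinomialTerm hc hx hx1 z).of_abs.hasSum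
  have hrows := hsum.prod_fiberwise (hasSum_expBinomialTerm_fst z hx')
  have hexp : HasSum (fun m : ℕ => z ^ m / m !) (Real.exp z) :=
    Real.exp_eq_exp_ℝ ▸ NormedSpace.expSeries_div_hasSum_exp z
  rwa [hexp.unique hrows]

end expBinomialTerm

theorem sq_div_one_add_sq_lt_one (a : ℝ) : a ^ 2 / (1 + a ^ 2) < 1 := by
  rw [div_lt_one (by positivity)]
  linarith

noncomputable def hermiteExpCoeff (a : ℝ) (n : ℕ) : ℝ :=
  (-1 : ℝ) ^ n * a ^ (2 * n) /
    (2 ^ (2 * n) * (n.factorial : ℝ) * (1 + a ^ 2) ^ ((n : ℝ) + 1 / 2))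

theorem expBinomialTerm_eq_hermiteExpCoeff_mul (a y : ℝ) (m j : ℕ) :
    expBinomialTerm (1 / 2) (-(a ^ 2 * y ^ 2)) (a ^ 2 / (1 + a ^ 2)) (m, j) =
      hermiteExpCoeff a (m + j) *
        ((2 * (m + j))! * ((-1) ^ j / (j ! * (2 * m)!) * (2 * y) ^ (2 * m))) := by
  have hA : 0 < 1 + a ^ 2 := by positivity
  have hpoch : 0 < (ascPochhammer ℝ m).eval (1 / 2 : ℝ) := ascPochhammer_pos m _ one_half_pos
  have hcompl : (1 - a ^ 2 / (1 + a ^ 2)) ^ ((1 / 2 : ℝ) + m) =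
      1 / (1 + a ^ 2) ^ ((1 / 2 : ℝ) + m) := by
    have : 1 - a ^ 2 / (1 + a ^ 2) = (1 + a ^ 2)⁻¹ := by field_simp; ring
    rw [this, Real.inv_rpow hA.le, inv_eq_one_div]
  have hsplit : (1 + a ^ 2) ^ (((m + j : ℕ) : ℝ) + 1 / 2) =
      (1 + a ^ 2) ^ j * (1 + a ^ 2) ^ ((1 / 2 : ℝ) + m) := by
    rw [← Real.rpow_natCast (1 + a ^ 2) j, ← Real.rpow_add hA]
    push_cast
    ring_nf
  simp only [expBinomialTerm, hermiteExpCoeff]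
  rw [hcompl, hsplit, div_pow, Nat.cast_factorial_two_mul, Nat.cast_factorial_two_mul,
    ascPochhammer_eval_add, pow_mul, pow_mul, pow_mul, pow_add]
  field_simp
  ring_nf
  rw [pow_mul' (-1 : ℝ) j 2, neg_one_sq, one_pow, mul_one]

theorem sum_antidiagonal_expBinomialTerm (a y : ℝ) (n : ℕ) :
    ∑ p ∈ antidiagonal n, expBinomialTerm (1 / 2) (-(a ^ 2 * y ^ 2)) (a ^ 2 / (1 + a ^ 2)) p =
      hermiteExpCoeff a n * hermitePhys (2 * n) y := by
  rw [← Nat.sum_antidiagonal_swap, Nat.sum_antidiagonal_eq_sum_range_succ_mk, hermitePhys,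
    Nat.mul_div_cancel_left n two_pos, mul_sum, mul_sum]
  refine sum_congr rfl fun j hj => ?_
  obtain ⟨m, rfl⟩ : ∃ m, n = m + j := ⟨n - j, by grind⟩
  rw [Prod.swap_prod_mk, Nat.add_sub_cancel, show 2 * (m + j) - 2 * j = 2 * m by omega,
    expBinomialTerm_eq_hermiteExpCoeff_mul]

theorem hasSum_hermiteExpCoeff_mul_hermitePhys (a y : ℝ) :
    HasSum (fun n => hermiteExpCoeff a n * hermitePhys (2 * n) y)
      (Real.exp (-(a ^ 2 * y ^ 2))) := by
  have h := (hasSum_expBinomialTerm one_half_pos (by positivity) (sq_div_one_add_sq_lt_one a)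
    (-(a ^ 2 * y ^ 2))).sum_antidiagonal
  rwa [funext (sum_antidiagonal_expBinomialTerm a y)] at h

theorem summable_abs_hermiteExpCoeff_mul_hermitePhys (a y : ℝ) :
    Summable fun n => |hermiteExpCoeff a n * hermitePhys (2 * n) y| := by
  have habs := (summable_abs_expBinomialTerm one_half_pos (by positivity)
    (sq_div_one_add_sq_lt_one a) (-(a ^ 2 * y ^ 2))).hasSum.sum_antidiagonal
  refine habs.summable.of_nonneg_of_le (fun n => abs_nonneg _) fun n => ?_
  rw [← sum_antidiagonal_expBinomialTerm]
  exact abs_sum_le_sum_abs _ _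

theorem exp_neg_sq_eq_tsum_hermitePhys_general (a y : ℝ) :
    Summable (fun n : ℕ =>
      |(-1 : ℝ) ^ n * a ^ (2 * n) /
          (2 ^ (2 * n) * (n.factorial : ℝ) * (1 + a ^ 2) ^ ((n : ℝ) + 1 / 2)) *
        hermitePhys (2 * n) y|) ∧
    Real.exp (-(a ^ 2 * y ^ 2))
      = ∑' n : ℕ, (-1 : ℝ) ^ n * a ^ (2 * n) /
          (2 ^ (2 * n) * (n.factorial : ℝ) * (1 + a ^ 2) ^ ((n : ℝ) + 1 / 2)) *
        hermitePhys (2 * n) y :=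
  ⟨summable_abs_hermiteExpCoeff_mul_hermitePhys a y,
    (hasSum_hermiteExpCoeff_mul_hermitePhys a y).tsum_eq.symm⟩

/-- Mehler-type expansion: for `a > 0` and `y ∈ ℝ`,
`exp(-a²y²) = ∑_{n≥0} (-1)^n a^{2n} / (2^{2n} n! (1+a²)^{n+1/2}) H_{2n}(y)`,
with absolute convergence. -/
theorem exp_neg_sq_eq_tsum_hermitePhys (a y : ℝ) (ha : 0 < a) :
    Summable (fun n : ℕ =>
      |(-1 : ℝ) ^ n * a ^ (2 * n) /
          (2 ^ (2 * n) * (n.factorial : ℝ) * (1 + a ^ 2) ^ ((n : ℝ) + 1 / 2)) *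
        hermitePhys (2 * n) y|) ∧
    Real.exp (-(a ^ 2 * y ^ 2))
      = ∑' n : ℕ, (-1 : ℝ) ^ n * a ^ (2 * n) /
          (2 ^ (2 * n) * (n.factorial : ℝ) * (1 + a ^ 2) ^ ((n : ℝ) + 1 / 2)) *
        hermitePhys (2 * n) y :=
  exp_neg_sq_eq_tsum_hermitePhys_general a y
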